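/- arXiv:2011.04636 — 4 statements merged into one kernel-verified Lean document; each statement's English description precedes it below -/
import Mathlib

section
/- Structural non-identifiability of the parameter m2 (Sections S.7–S.8). Suppose (G, I, i1, i2, H, h1, ξ) is a solution of the bihormonal–glucose model (1)–(7) on an interval J with parameters (k1, kI, ki1, kH, rG, m1, m2, m3, m4, n, n1, n2, x1, x2, Ib, Hb, p, q). Then for every λ > 0, the functions (G, λ·I, i1, i2, H, h1, ξ) solve the bihormonal–glucose model (1)–(7) on J with the parameters obtained by replacing kI by kI/λ, Ib by λ·Ib, m2 by λ·m2 and x2 by x2/λ (all other parameters and inputs unchanged). In particular, this one-parameter family of distinct parameter sets produces exactly the same glucose output G. -/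
theorem structural_nonidentifiability_m2_general
    (J : Set ℝ)
    (G I i1 i2 H h1 ξ RaG uI uH : ℝ → ℝ)
    (k1 kI ki1 kH rG m1 m2 m3 m4 n n1 n2 x1 x2 Ib Hb p q : ℝ)
    (hG : ∀ t ∈ J, HasDerivAt G
      (-(k1 + kI * (I t + Ib) + ki1 * i1 t) * G t + kH * (H t + Hb) * ξ t + rG * RaG t) t)
    (hI : ∀ t ∈ J, HasDerivAt I (-m1 * I t + m2 * i1 t ^ p) t)
    (hi1 : ∀ t ∈ J, HasDerivAt i1 (-m3 * i1 t ^ q + m4 * i2 t) t)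
    (hi2 : ∀ t ∈ J, HasDerivAt i2 (-m4 * i2 t + uI t) t)
    (hH : ∀ t ∈ J, HasDerivAt H (-n * H t + n2 * h1 t) t)
    (hh1 : ∀ t ∈ J, HasDerivAt h1 (-n1 * h1 t + uH t) t)
    (hξ : ∀ t ∈ J, HasDerivAt ξ (-x1 * H t * ξ t + x2 * G t * I t) t) :
    ∀ lam : ℝ, 0 < lam → ∀ t ∈ J,
      HasDerivAt G
        (-(k1 + (kI / lam) * (lam * I t + lam * Ib) + ki1 * i1 t) * G t
          + kH * (H t + Hb) * ξ t + rG * RaG t) t ∧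
      HasDerivAt (fun s => lam * I s) (-m1 * (lam * I t) + (lam * m2) * i1 t ^ p) t ∧
      HasDerivAt i1 (-m3 * i1 t ^ q + m4 * i2 t) t ∧
      HasDerivAt i2 (-m4 * i2 t + uI t) t ∧
      HasDerivAt H (-n * H t + n2 * h1 t) t ∧
      HasDerivAt h1 (-n1 * h1 t + uH t) t ∧
      HasDerivAt ξ (-x1 * H t * ξ t + (x2 / lam) * G t * (lam * I t)) t := by
  intro lam hlam t ht
  have hlam0 : lam ≠ 0 := hlam.ne'
  refine ⟨(hG t ht).congr_deriv ?_, ((hI t ht).const_mul lam).congr_deriv (by ring),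
    hi1 t ht, hi2 t ht, hH t ht, hh1 t ht, (hξ t ht).congr_deriv ?_⟩
  · field_simp
  · field_simp

/-- Structural non-identifiability of the parameter `m2` (Sections S.7–S.8).
If `(G, I, i1, i2, H, h1, ξ)` solves the bihormonal–glucose model (1)–(7) on
`J`, then for every `λ > 0` the functions `(G, λ·I, i1, i2, H, h1, ξ)` solve
the model with `kI` replaced by `kI/λ`, `Ib` by `λ·Ib`, `m2` by `λ·m2` and
`x2` by `x2/λ`, producing exactly the same glucose output `G`. -/
theorem structural_nonidentifiability_m2
    (J : Set ℝ)
    (G I i1 i2 H h1 ξ RaG uI uH : ℝ → ℝ)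
    (k1 kI ki1 kH rG m1 m2 m3 m4 n n1 n2 x1 x2 Ib Hb p q : ℝ)
    (hi1pos : ∀ t ∈ J, 0 < i1 t)
    (hG : ∀ t ∈ J, HasDerivAt G
      (-(k1 + kI * (I t + Ib) + ki1 * i1 t) * G t + kH * (H t + Hb) * ξ t + rG * RaG t) t)
    (hI : ∀ t ∈ J, HasDerivAt I (-m1 * I t + m2 * i1 t ^ p) t)
    (hi1 : ∀ t ∈ J, HasDerivAt i1 (-m3 * i1 t ^ q + m4 * i2 t) t)
    (hi2 : ∀ t ∈ J, HasDerivAt i2 (-m4 * i2 t + uI t) t)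
    (hH : ∀ t ∈ J, HasDerivAt H (-n * H t + n2 * h1 t) t)
    (hh1 : ∀ t ∈ J, HasDerivAt h1 (-n1 * h1 t + uH t) t)
    (hξ : ∀ t ∈ J, HasDerivAt ξ (-x1 * H t * ξ t + x2 * G t * I t) t) :
    ∀ lam : ℝ, 0 < lam → ∀ t ∈ J,
      HasDerivAt G
        (-(k1 + (kI / lam) * (lam * I t + lam * Ib) + ki1 * i1 t) * G t
          + kH * (H t + Hb) * ξ t + rG * RaG t) t ∧
      HasDerivAt (fun s => lam * I s) (-m1 * (lam * I t) + (lam * m2) * i1 t ^ p) t ∧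
      HasDerivAt i1 (-m3 * i1 t ^ q + m4 * i2 t) t ∧
      HasDerivAt i2 (-m4 * i2 t + uI t) t ∧
      HasDerivAt H (-n * H t + n2 * h1 t) t ∧
      HasDerivAt h1 (-n1 * h1 t + uH t) t ∧
      HasDerivAt ξ (-x1 * H t * ξ t + (x2 / lam) * G t * (lam * I t)) t :=
  structural_nonidentifiability_m2_general J G I i1 i2 H h1 ξ RaG uI uH k1 kI ki1 kH rG m1 m2 m3 m4
    n n1 n2 x1 x2 Ib Hb p q hG hI hi1 hi2 hH hh1 hξ
end

section
/- Structural non-identifiability of the parameter n2 (Sections S.7–S.8). Suppose (G, I, i1, i2, H, h1, ξ) is a solution of the bihormonal–glucose model (1)–(7) on an interval J. Then for every μ > 0, the functions (G, I, i1, i2, μ·H, h1, ξ) solve the bihormonal–glucose model (1)–(7) on J with the parameters obtained by replacing kH by kH/μ, Hb by μ·Hb, n2 by μ·n2 and x1 by x1/μ (all other parameters and inputs unchanged). In particular, this one-parameter family of distinct parameter sets produces exactly the same glucose output G. -/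
/-!
The hormone `H` enters the glucose and remote-action equations only through the products
`kH * (H + Hb)` and `x1 * H`, and its own equation is linear in `(H, h1)`. Rescaling `H` by `μ`
is therefore absorbed by dividing `kH` and `x1` by `μ` and multiplying `Hb` and `n2` by `μ`,
while the other state variables, and in particular `G`, are untouched.
-/

theorem HasDerivAt.const_mul_of_linear {𝕜 : Type*} [NontriviallyNormedField 𝕜]
    {H h : 𝕜 → 𝕜} {n n₂ t : 𝕜} (μ : 𝕜) (hH : HasDerivAt H (-n * H t + n₂ * h t) t) :
    HasDerivAt (fun s => μ * H s) (-n * (μ * H t) + μ * n₂ * h t) t :=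
  (hH.const_mul μ).congr_deriv (by ring)

theorem structural_nonidentifiability_n2_general
    (J : Set ℝ)
    (G I i1 i2 H h1 ξ RaG uI uH : ℝ → ℝ)
    (k1 kI ki1 kH rG m1 m2 m3 m4 n n1 n2 x1 x2 Ib Hb p q : ℝ)
    (hG : ∀ t ∈ J, HasDerivAt G
      (-(k1 + kI * (I t + Ib) + ki1 * i1 t) * G t + kH * (H t + Hb) * ξ t + rG * RaG t) t)
    (hI : ∀ t ∈ J, HasDerivAt I (-m1 * I t + m2 * i1 t ^ p) t)
    (hi1 : ∀ t ∈ J, HasDerivAt i1 (-m3 * i1 t ^ q + m4 * i2 t) t)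
    (hi2 : ∀ t ∈ J, HasDerivAt i2 (-m4 * i2 t + uI t) t)
    (hH : ∀ t ∈ J, HasDerivAt H (-n * H t + n2 * h1 t) t)
    (hh1 : ∀ t ∈ J, HasDerivAt h1 (-n1 * h1 t + uH t) t)
    (hξ : ∀ t ∈ J, HasDerivAt ξ (-x1 * H t * ξ t + x2 * G t * I t) t) :
    ∀ μ : ℝ, 0 < μ → ∀ t ∈ J,
      HasDerivAt G
        (-(k1 + kI * (I t + Ib) + ki1 * i1 t) * G t
          + (kH / μ) * (μ * H t + μ * Hb) * ξ t + rG * RaG t) t ∧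
      HasDerivAt I (-m1 * I t + m2 * i1 t ^ p) t ∧
      HasDerivAt i1 (-m3 * i1 t ^ q + m4 * i2 t) t ∧
      HasDerivAt i2 (-m4 * i2 t + uI t) t ∧
      HasDerivAt (fun s => μ * H s) (-n * (μ * H t) + (μ * n2) * h1 t) t ∧
      HasDerivAt h1 (-n1 * h1 t + uH t) t ∧
      HasDerivAt ξ (-(x1 / μ) * (μ * H t) * ξ t + x2 * G t * I t) t := by
  intro μ hμ t ht
  have hcoupling : kH / μ * (μ * H t + μ * Hb) = kH * (H t + Hb) := by
    rw [← mul_add, ← mul_assoc, div_mul_cancel₀ _ hμ.ne']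
  have hremote : -(x1 / μ) * (μ * H t) = -x1 * H t := by
    rw [neg_div', ← mul_assoc, div_mul_cancel₀ _ hμ.ne']
  refine ⟨?_, hI t ht, hi1 t ht, hi2 t ht, (hH t ht).const_mul_of_linear μ, hh1 t ht, ?_⟩
  · rw [hcoupling]
    exact hG t ht
  · rw [hremote]
    exact hξ t ht

/-- Structural non-identifiability of the parameter `n2` (Sections S.7–S.8).
If `(G, I, i1, i2, H, h1, ξ)` solves the bihormonal–glucose model (1)–(7) on
`J`, then for every `μ > 0` the functions `(G, I, i1, i2, μ·H, h1, ξ)` solve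
the model with `kH` replaced by `kH/μ`, `Hb` by `μ·Hb`, `n2` by `μ·n2` and
`x1` by `x1/μ`, producing exactly the same glucose output `G`. -/
theorem structural_nonidentifiability_n2
    (J : Set ℝ)
    (G I i1 i2 H h1 ξ RaG uI uH : ℝ → ℝ)
    (k1 kI ki1 kH rG m1 m2 m3 m4 n n1 n2 x1 x2 Ib Hb p q : ℝ)
    (hi1pos : ∀ t ∈ J, 0 < i1 t)
    (hG : ∀ t ∈ J, HasDerivAt G
      (-(k1 + kI * (I t + Ib) + ki1 * i1 t) * G t + kH * (H t + Hb) * ξ t + rG * RaG t) t)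
    (hI : ∀ t ∈ J, HasDerivAt I (-m1 * I t + m2 * i1 t ^ p) t)
    (hi1 : ∀ t ∈ J, HasDerivAt i1 (-m3 * i1 t ^ q + m4 * i2 t) t)
    (hi2 : ∀ t ∈ J, HasDerivAt i2 (-m4 * i2 t + uI t) t)
    (hH : ∀ t ∈ J, HasDerivAt H (-n * H t + n2 * h1 t) t)
    (hh1 : ∀ t ∈ J, HasDerivAt h1 (-n1 * h1 t + uH t) t)
    (hξ : ∀ t ∈ J, HasDerivAt ξ (-x1 * H t * ξ t + x2 * G t * I t) t) :
    ∀ μ : ℝ, 0 < μ → ∀ t ∈ J,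
      HasDerivAt G
        (-(k1 + kI * (I t + Ib) + ki1 * i1 t) * G t
          + (kH / μ) * (μ * H t + μ * Hb) * ξ t + rG * RaG t) t ∧
      HasDerivAt I (-m1 * I t + m2 * i1 t ^ p) t ∧
      HasDerivAt i1 (-m3 * i1 t ^ q + m4 * i2 t) t ∧
      HasDerivAt i2 (-m4 * i2 t + uI t) t ∧
      HasDerivAt (fun s => μ * H s) (-n * (μ * H t) + (μ * n2) * h1 t) t ∧
      HasDerivAt h1 (-n1 * h1 t + uH t) t ∧
      HasDerivAt ξ (-(x1 / μ) * (μ * H t) * ξ t + x2 * G t * I t) t :=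
  structural_nonidentifiability_n2_general J G I i1 i2 H h1 ξ RaG uI uH k1 kI ki1 kH rG m1 m2 m3 m4
    n n1 n2 x1 x2 Ib Hb p q hG hI hi1 hi2 hH hh1 hξ
end

section
/- Nontrivial null-space of the Jacobi matrix in the parameters (m1, m2, n, n2, x1, x2) (Section S.7.1). Let x = (G, I, i1, i2, H, h1, ξ) ∈ ℝ^7 with G ≠ 0, I ≠ 0, i1 > 0, H ≠ 0, h1 ≠ 0, ξ ≠ 0. Consider the row vector j = (I·kI·G, −i1^p·kI·G, −H·kH·ξ, h1·kH·ξ, −H·ξ·kH·(H + Hb), G·I·kH·(H + Hb)) of partial derivatives of the second Lie derivative Ψ with respect to (m1, m2, n, n2, x1, x2). Then each of the three vectors v1 = (1/I, 1/i1^p, 0, 0, 0, 0), v2 = (0, 0, 1/H, 1/h1, 0, 0), v3 = (0, 0, 0, 0, 1/(H·ξ), 1/(G·I)) satisfies j · v = 0. Moreover the functions L_{f0}h(x) = −K(x)·G + kH·(H + Hb)·ξ and L_{f1}L_{f0}h(x) = −rG·K(x) do not depend on (m1, m2, n, n2, x1, x2), so their parameter-gradients with respect to these six parameters vanish; hence the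 Jacobi matrix whose rows are the gradients of L_{f0}h, L_{f0}L_{f0}h and L_{f1}L_{f0}h with respect to (m1, m2, n, n2, x1, x2) has a nontrivial null space containing v1, v2 and v3. -/
/-! Each null vector moves one pair of parameters that enters `Ψ` only through a single
combination: `−m1·I + m2·i1^p`, `−n·H + n2·h1` and `−x1·H·ξ + x2·G·I`. Moving the pair
by the reciprocals of its two coefficients leaves that combination fixed, so the two
contributions to `j · v` cancel. The other two Lie derivatives do not involve the six
parameters at all, so the Jacobi matrix has rows `0`, `j`, `0`. -/

open Matrix

lemma of_zero_vec_zero_mulVec {R n : Type*} [NonUnitalNonAssocSemiring R] [Fintype n]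
    (j v : n → R) : Matrix.of ![(0 : n → R), j, 0] *ᵥ v = ![0, j ⬝ᵥ v, 0] := by
  ext i
  fin_cases i <;> simp [mulVec]

noncomputable section NullVectors

variable (kI kH Hb p G I i1 H h1 ξ : ℝ)

/-- Coordinates are ordered `(m1, m2, n, n2, x1, x2)`. -/
def psiParamGrad : Fin 6 → ℝ :=
  ![I * kI * G, -(i1 ^ p) * kI * G, -H * kH * ξ, h1 * kH * ξ,
    -H * ξ * kH * (H + Hb), G * I * kH * (H + Hb)]

def nullVec₁ : Fin 6 → ℝ := ![1 / I, 1 / i1 ^ p, 0, 0, 0, 0]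

def nullVec₂ : Fin 6 → ℝ := ![0, 0, 1 / H, 1 / h1, 0, 0]

def nullVec₃ : Fin 6 → ℝ := ![0, 0, 0, 0, 1 / (H * ξ), 1 / (G * I)]

variable {kI kH Hb p G I i1 H h1 ξ}

lemma psiParamGrad_dotProduct_nullVec₁ (hI : I ≠ 0) (hi1 : 0 < i1) :
    psiParamGrad kI kH Hb p G I i1 H h1 ξ ⬝ᵥ nullVec₁ p I i1 = 0 := by
  have hi1p : i1 ^ p ≠ 0 := (Real.rpow_pos_of_pos hi1 p).ne'
  simp only [dotProduct, Fin.sum_univ_six, psiParamGrad, nullVec₁, cons_val]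
  field_simp
  ring

lemma psiParamGrad_dotProduct_nullVec₂ (hH : H ≠ 0) (hh1 : h1 ≠ 0) :
    psiParamGrad kI kH Hb p G I i1 H h1 ξ ⬝ᵥ nullVec₂ H h1 = 0 := by
  simp only [dotProduct, Fin.sum_univ_six, psiParamGrad, nullVec₂, cons_val]
  field_simp
  ring

lemma psiParamGrad_dotProduct_nullVec₃ (hG : G ≠ 0) (hI : I ≠ 0) (hH : H ≠ 0) (hξ : ξ ≠ 0) :
    psiParamGrad kI kH Hb p G I i1 H h1 ξ ⬝ᵥ nullVec₃ G I H ξ = 0 := by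
  simp only [dotProduct, Fin.sum_univ_six, psiParamGrad, nullVec₃, cons_val]
  field_simp
  ring

lemma nullVec₁_ne_zero (hI : I ≠ 0) : nullVec₁ p I i1 ≠ 0 := by
  simp [nullVec₁, hI]

lemma nullVec₂_ne_zero (hH : H ≠ 0) : nullVec₂ H h1 ≠ 0 := by
  simp [nullVec₂, hH]

lemma nullVec₃_ne_zero (hH : H ≠ 0) (hξ : ξ ≠ 0) : nullVec₃ G I H ξ ≠ 0 := by
  simp [nullVec₃, hH, hξ]

end NullVectors

theorem jacobi_nullspace_six_parameters_general
    (k1 kI ki1 kH rG Ib Hb p : ℝ)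
    (G I i1 H h1 ξ : ℝ)
    (hG : G ≠ 0) (hI : I ≠ 0) (hi1 : 0 < i1) (hH : H ≠ 0) (hh1 : h1 ≠ 0)
    (hξ : ξ ≠ 0)
    (j v1 v2 v3 : Fin 6 → ℝ)
    (hj : j = ![I * kI * G, -(i1 ^ p) * kI * G, -H * kH * ξ, h1 * kH * ξ,
      -H * ξ * kH * (H + Hb), G * I * kH * (H + Hb)])
    (hv1 : v1 = ![1 / I, 1 / i1 ^ p, 0, 0, 0, 0])
    (hv2 : v2 = ![0, 0, 1 / H, 1 / h1, 0, 0])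
    (hv3 : v3 = ![0, 0, 0, 0, 1 / (H * ξ), 1 / (G * I)]) :
    (∑ i, j i * v1 i = 0) ∧ (∑ i, j i * v2 i = 0) ∧ (∑ i, j i * v3 i = 0) ∧
    -- `L_{f0}h` and `L_{f1}L_{f0}h` do not depend on the six parameters:
    -- their gradients with respect to `(m1, m2, n, n2, x1, x2)` vanish.
    (∀ θ : Fin 6 → ℝ,
      fderiv ℝ (fun _ : Fin 6 → ℝ =>
        -(k1 + kI * (I + Ib) + ki1 * i1) * G + kH * (H + Hb) * ξ) θ = 0) ∧
    (∀ θ : Fin 6 → ℝ,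
      fderiv ℝ (fun _ : Fin 6 → ℝ =>
        -rG * (k1 + kI * (I + Ib) + ki1 * i1)) θ = 0) ∧
    -- the Jacobi matrix has rows `0`, `j`, `0`, and `v1, v2, v3` lie in its
    -- (nontrivial) null space.
    v1 ≠ 0 ∧ v2 ≠ 0 ∧ v3 ≠ 0 ∧
    (Matrix.of ![(0 : Fin 6 → ℝ), j, 0]).mulVec v1 = 0 ∧
    (Matrix.of ![(0 : Fin 6 → ℝ), j, 0]).mulVec v2 = 0 ∧
    (Matrix.of ![(0 : Fin 6 → ℝ), j, 0]).mulVec v3 = 0 := by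
  have h₁ : j ⬝ᵥ v1 = 0 := hj ▸ hv1 ▸ psiParamGrad_dotProduct_nullVec₁ hI hi1
  have h₂ : j ⬝ᵥ v2 = 0 := hj ▸ hv2 ▸ psiParamGrad_dotProduct_nullVec₂ hH hh1
  have h₃ : j ⬝ᵥ v3 = 0 := hj ▸ hv3 ▸ psiParamGrad_dotProduct_nullVec₃ hG hI hH hξ
  refine ⟨h₁, h₂, h₃, fun _ => fderiv_const_apply _, fun _ => fderiv_const_apply _,
    hv1 ▸ nullVec₁_ne_zero hI, hv2 ▸ nullVec₂_ne_zero hH, hv3 ▸ nullVec₃_ne_zero hH hξ,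
    ?_, ?_, ?_⟩
  · rw [of_zero_vec_zero_mulVec, h₁]; simp
  · rw [of_zero_vec_zero_mulVec, h₂]; simp
  · rw [of_zero_vec_zero_mulVec, h₃]; simp

/-- Nontrivial null-space of the Jacobi matrix in the parameters
`(m1, m2, n, n2, x1, x2)` (Section S.7.1). With a state
`(G, I, i1, i2, H, h1, ξ)` whose relevant coordinates are nonzero, the row
vector `j` of partial derivatives of the second Lie derivative `Ψ` with
respect to `(m1, m2, n, n2, x1, x2)` annihilates the three vectors
`v1, v2, v3`. Moreover `L_{f0}h` and `L_{f1}L_{f0}h` do not depend on these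
six parameters (their parameter-gradients vanish identically), hence the
Jacobi matrix with rows the gradients of `L_{f0}h`, `L_{f0}L_{f0}h` and
`L_{f1}L_{f0}h` has a nontrivial null space containing `v1`, `v2`, `v3`. -/
theorem jacobi_nullspace_six_parameters
    (k1 kI ki1 kH rG m3 m4 Ib Hb p q : ℝ)
    (G I i1 i2 H h1 ξ : ℝ)
    (hG : G ≠ 0) (hI : I ≠ 0) (hi1 : 0 < i1) (hH : H ≠ 0) (hh1 : h1 ≠ 0)
    (hξ : ξ ≠ 0)
    (j v1 v2 v3 : Fin 6 → ℝ)
    (hj : j = ![I * kI * G, -(i1 ^ p) * kI * G, -H * kH * ξ, h1 * kH * ξ,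
      -H * ξ * kH * (H + Hb), G * I * kH * (H + Hb)])
    (hv1 : v1 = ![1 / I, 1 / i1 ^ p, 0, 0, 0, 0])
    (hv2 : v2 = ![0, 0, 1 / H, 1 / h1, 0, 0])
    (hv3 : v3 = ![0, 0, 0, 0, 1 / (H * ξ), 1 / (G * I)]) :
    (∑ i, j i * v1 i = 0) ∧ (∑ i, j i * v2 i = 0) ∧ (∑ i, j i * v3 i = 0) ∧
    -- `L_{f0}h` and `L_{f1}L_{f0}h` do not depend on the six parameters:
    -- their gradients with respect to `(m1, m2, n, n2, x1, x2)` vanish.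
    (∀ θ : Fin 6 → ℝ,
      fderiv ℝ (fun _ : Fin 6 → ℝ =>
        -(k1 + kI * (I + Ib) + ki1 * i1) * G + kH * (H + Hb) * ξ) θ = 0) ∧
    (∀ θ : Fin 6 → ℝ,
      fderiv ℝ (fun _ : Fin 6 → ℝ =>
        -rG * (k1 + kI * (I + Ib) + ki1 * i1)) θ = 0) ∧
    -- the Jacobi matrix has rows `0`, `j`, `0`, and `v1, v2, v3` lie in its
    -- (nontrivial) null space.
    v1 ≠ 0 ∧ v2 ≠ 0 ∧ v3 ≠ 0 ∧
    (Matrix.of ![(0 : Fin 6 → ℝ), j, 0]).mulVec v1 = 0 ∧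
    (Matrix.of ![(0 : Fin 6 → ℝ), j, 0]).mulVec v2 = 0 ∧
    (Matrix.of ![(0 : Fin 6 → ℝ), j, 0]).mulVec v3 = 0 :=
  jacobi_nullspace_six_parameters_general k1 kI ki1 kH rG Ib Hb p G I i1 H h1 ξ hG hI hi1 hH hh1 hξ
    j v1 v2 v3 hj hv1 hv2 hv3
end

section
/- Nontrivial null-space of the extended Jacobi matrix in the parameters (kI, ki1, m1, m2, n, n2, x1, x2) (Section S.7.3). Let x = (G, I, i1, i2, H, h1, ξ) ∈ ℝ^7 with G ≠ 0, I ≠ 0, i1 > 0, H ≠ 0, h1 ≠ 0, ξ ≠ 0. Let r1, r2, r3 ∈ ℝ^8 be respectively the gradients of φ, Ψ and −rG·K with respect to the eight parameters θ = (kI, ki1, m1, m2, n, n2, x1, x2) evaluated at these values. Then each of the three vectors w1 = (0, 0, 1/I, 1/i1^p, 0, 0, 0, 0), w2 = (0, 0, 0, 0, 1/H, 1/h1, 0, 0), w3 = (0, 0, 0, 0, 0, 0, 1/(H·ξ), 1/(G·I)) satisfies r1 · w = r2 · w = r3 · w = 0; hence the matrix with rows r1, r2, r3 has a nontrivial null space.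 -/
/-!
Each `wᵢ` vanishes in the coordinates `kI, ki1`, the only ones on which `K`, hence `φ` and
`−rG·K`, depend. The parameters that `wᵢ` does move enter `Ψ` only through one combination
`−θⱼ·a + θₖ·b` (with `(a, b) = (I, i1^p)`, `(H, h1)` or `(H·ξ, G·I)`), and `wᵢ` has the entries
`1/a`, `1/b` there, so the two shifts cancel. All three functions are therefore constant on the
lines `θ₀ + t·wᵢ`, and a directional derivative along a line of constancy vanishes.
-/

theorem fderiv_apply_eq_zero_of_forall_add_smul {𝕜 E F : Type*} [NontriviallyNormedField 𝕜]
    [NormedAddCommGroup E] [NormedSpace 𝕜 E] [NormedAddCommGroup F] [NormedSpace 𝕜 F]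
    {f : E → F} {x v : E} (hf : ∀ t : 𝕜, f (x + t • v) = f x) : fderiv 𝕜 f x v = 0 := by
  by_cases hdiff : DifferentiableAt 𝕜 f x
  · rw [← hdiff.lineDeriv_eq_fderiv, lineDeriv, funext hf, deriv_const]
  · rw [fderiv_zero_of_not_differentiableAt hdiff, zero_apply]

/-- Nontrivial null-space of the extended Jacobi matrix in the parameters
`(kI, ki1, m1, m2, n, n2, x1, x2)` (Section S.7.3). The rows `r1, r2, r3` of
the Jacobi matrix are the gradients of `φ`, `Ψ` and `−rG·K` with respect to
the parameter vector `θ = (kI, ki1, m1, m2, n, n2, x1, x2)`; applying each of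
these gradients (Fréchet derivatives) to the vectors `w1, w2, w3` gives zero,
and the `w`'s are nonzero, hence the matrix with rows `r1, r2, r3` has a
nontrivial null space. -/
theorem extended_jacobi_nullspace_eight_parameters
    (k1 kI ki1 kH rG m1 m2 m3 m4 n n2 x1 x2 Ib Hb p q : ℝ)
    (G I i1 i2 H h1 ξ : ℝ)
    (hG : G ≠ 0) (hI : I ≠ 0) (hi1 : 0 < i1) (hH : H ≠ 0) (hh1 : h1 ≠ 0)
    (hξ : ξ ≠ 0)
    (Φ Ψ M : (Fin 8 → ℝ) → ℝ)
    (hΦ : Φ = fun θ : Fin 8 → ℝ =>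
      -(k1 + θ 0 * (I + Ib) + θ 1 * i1) * G + kH * (H + Hb) * ξ)
    (hΨ : Ψ = fun θ : Fin 8 → ℝ =>
      Φ θ * (-(k1 + θ 0 * (I + Ib) + θ 1 * i1))
      + (-(θ 2) * I + θ 3 * i1 ^ p) * (-(θ 0 * G))
      + (-m3 * i1 ^ q + m4 * i2) * (-(θ 1 * G))
      + (-(θ 4) * H + θ 5 * h1) * (kH * ξ)
      + (-(θ 6) * H * ξ + θ 7 * G * I) * (kH * (H + Hb)))
    (hM : M = fun θ : Fin 8 → ℝ =>
      -rG * (k1 + θ 0 * (I + Ib) + θ 1 * i1))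
    (θ₀ w1 w2 w3 : Fin 8 → ℝ)
    (hθ₀ : θ₀ = ![kI, ki1, m1, m2, n, n2, x1, x2])
    (hw1 : w1 = ![0, 0, 1 / I, 1 / i1 ^ p, 0, 0, 0, 0])
    (hw2 : w2 = ![0, 0, 0, 0, 1 / H, 1 / h1, 0, 0])
    (hw3 : w3 = ![0, 0, 0, 0, 0, 0, 1 / (H * ξ), 1 / (G * I)]) :
    (fderiv ℝ Φ θ₀ w1 = 0 ∧ fderiv ℝ Ψ θ₀ w1 = 0 ∧ fderiv ℝ M θ₀ w1 = 0) ∧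
    (fderiv ℝ Φ θ₀ w2 = 0 ∧ fderiv ℝ Ψ θ₀ w2 = 0 ∧ fderiv ℝ M θ₀ w2 = 0) ∧
    (fderiv ℝ Φ θ₀ w3 = 0 ∧ fderiv ℝ Ψ θ₀ w3 = 0 ∧ fderiv ℝ M θ₀ w3 = 0) ∧
    w1 ≠ 0 ∧ w2 ≠ 0 ∧ w3 ≠ 0 := by
  have hip : i1 ^ p ≠ 0 := (Real.rpow_pos_of_pos hi1 p).ne'
  subst hΨ hΦ hM hθ₀ hw1 hw2 hw3
  refine ⟨⟨?_, ?_, ?_⟩, ⟨?_, ?_, ?_⟩, ⟨?_, ?_, ?_⟩, Function.ne_iff.2 ⟨2, by simpa using hI⟩,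
    Function.ne_iff.2 ⟨4, by simpa using hH⟩, Function.ne_iff.2 ⟨6, by simpa using ⟨hξ, hH⟩⟩⟩ <;>
  refine fderiv_apply_eq_zero_of_forall_add_smul fun t => ?_ <;>
  simp [-mul_eq_mul_right_iff] <;> field_simp <;> ring
end
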